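/- arXiv:1810.05471 — 2 statements merged into one kernel-verified Lean document; each statement's English description precedes it below -/
import Mathlib

section
/- Let f : ℝ^n → ℝ be differentiable and convex, and let 𝒰 : [0, ∞) → [0, ∞) be increasing with 𝒰(0) = 0 such that f is U-convex with U(u) = 𝒰(‖u‖₂). Let λ > 0 and (β, θ) ∈ ℝ^p × ℝ^n with Ω(β) and Ω*(X^⊤θ) finite, and suppose the supremum defining f*(−λθ) is attained at z₀ ∈ ℝ^n. Then 𝒰(‖Xβ − z₀‖₂) ≤ Gap_λ(β, θ) and f(Xβ) − f(z₀) ≤ ‖∇f(Xβ)‖₂ · ‖Xβ − z₀‖₂. -/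
/-!
At a maximiser `z₀` of `z ↦ ⟪-λθ, z⟫ - f z` the gradient of `f` is `-λθ`, so `U`-convexity at `z₀`
bounds `𝒰(‖Xβ - z₀‖)` by the Bregman divergence `f(Xβ) - f(z₀) - ⟪-λθ, Xβ - z₀⟫`; the Fenchel–Young
inequality for `Ω` then bounds its remaining term `λ⟪θ, Xβ⟫ = λ⟪Xᵀθ, β⟫` by `λ(Ω(β) + Ω*(Xᵀθ))`.
The second inequality is `U`-convexity at `Xβ` (with `𝒰 ≥ 0`) followed by Cauchy–Schwarz.
-/

open scoped RealInnerProductSpace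

noncomputable section

abbrev Vec (d : ℕ) := EuclideanSpace ℝ (Fin d)

/-- Matrix–vector product, landing in Euclidean space. -/
def mv {a b : ℕ} (M : Matrix (Fin a) (Fin b) ℝ) (v : Vec b) : Vec a := WithLp.toLp 2 (M.mulVec v)

/-- Fenchel conjugate of a real-valued function, with values in `EReal`. -/
noncomputable def rconj {d : ℕ} (f : Vec d → ℝ) (u : Vec d) : EReal :=
  ⨆ x, ((⟪u, x⟫ - f x : ℝ) : EReal)

/-- Fenchel conjugate of an `EReal`-valued function. -/
noncomputable def econj {d : ℕ} (g : Vec d → EReal) (u : Vec d) : EReal :=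
  ⨆ x, (((⟪u, x⟫ : ℝ) : EReal) - g x)

theorem HasGradientAt.eq_of_isMaxOn_inner_sub {F : Type*} [NormedAddCommGroup F]
    [InnerProductSpace ℝ F] [CompleteSpace F] {f : F → ℝ} {g u z₀ : F}
    (hf : HasGradientAt f g z₀) (hmax : IsMaxOn (fun z => ⟪u, z⟫ - f z) Set.univ z₀) :
    g = u := by
  open InnerProductSpace in
  have hderiv : HasFDerivAt (fun z => ⟪u, z⟫ - f z) (toDual ℝ F u - toDual ℝ F g) z₀ :=
    (toDual ℝ F u).hasFDerivAt.sub hf.hasFDerivAt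
  have hzero := (hmax.isLocalMax Filter.univ_mem).hasFDerivAt_eq_zero hderiv
  exact (toDual ℝ F).injective (sub_eq_zero.mp hzero).symm

theorem inner_sub_le_rconj {d : ℕ} (f : Vec d → ℝ) (u x : Vec d) :
    ((⟪u, x⟫ - f x : ℝ) : EReal) ≤ rconj f u :=
  le_iSup (fun x => ((⟪u, x⟫ - f x : ℝ) : EReal)) x

theorem inner_sub_le_econj {d : ℕ} (g : Vec d → EReal) (u x : Vec d) :
    ((⟪u, x⟫ : ℝ) : EReal) - g x ≤ econj g u :=
  le_iSup (fun x => ((⟪u, x⟫ : ℝ) : EReal) - g x) x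

theorem isMaxOn_of_rconj_eq {d : ℕ} {f : Vec d → ℝ} {u z₀ : Vec d}
    (h : rconj f u = ((⟪u, z₀⟫ - f z₀ : ℝ) : EReal)) :
    IsMaxOn (fun z => ⟪u, z⟫ - f z) Set.univ z₀ := fun z _ => by
  have hz := inner_sub_le_rconj f u z
  rw [h] at hz
  exact_mod_cast hz

theorem inner_le_add_of_econj_eq {d : ℕ} {g : Vec d → EReal} {u x : Vec d} {a b : ℝ}
    (hx : g x = a) (hu : econj g u = b) : ⟪u, x⟫ ≤ a + b := by
  have hxu := inner_sub_le_econj g u x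
  rw [hx, hu, ← EReal.coe_sub, EReal.coe_le_coe_iff] at hxu
  linarith

theorem inner_mv_transpose {a b : ℕ} (X : Matrix (Fin a) (Fin b) ℝ) (θ : Vec a) (β : Vec b) :
    ⟪mv X.transpose θ, β⟫ = ⟪θ, mv X β⟫ := by
  simp only [mv, EuclideanSpace.inner_eq_star_dotProduct,
    star_trivial, Matrix.mulVec_transpose, Matrix.dotProduct_mulVec, dotProduct_comm]

theorem stmt10_general {n p : ℕ} (X : Matrix (Fin n) (Fin p) ℝ)
    (f : Vec n → ℝ) (f' : Vec n → Vec n)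
    (hdiff : ∀ x, HasGradientAt f (f' x) x)
    (𝒰 : ℝ → ℝ)
    (h𝒰nn : ∀ t, 0 ≤ t → 0 ≤ 𝒰 t)
    (hU : ∀ x z : Vec n, 𝒰 ‖z - x‖ ≤ f z - f x - ⟪f' x, z - x⟫)
    (Ω : Vec p → EReal)
    (lam : ℝ) (hlam : 0 < lam)
    (β : Vec p) (θ : Vec n)
    (Ωβ Ωs : ℝ)
    (hΩβ : Ω β = (Ωβ : EReal))
    (hΩs : econj Ω (mv X.transpose θ) = (Ωs : EReal))
    (z₀ : Vec n)
    (hatt : rconj f ((-lam) • θ) = ((⟪(-lam) • θ, z₀⟫ - f z₀ : ℝ) : EReal)) :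
    𝒰 ‖mv X β - z₀‖ ≤
        f (mv X β) + (⟪(-lam) • θ, z₀⟫ - f z₀) + lam * (Ωβ + Ωs) ∧
    f (mv X β) - f z₀ ≤ ‖f' (mv X β)‖ * ‖mv X β - z₀‖ := by
  have hgrad : f' z₀ = (-lam) • θ := (hdiff z₀).eq_of_isMaxOn_inner_sub (isMaxOn_of_rconj_eq hatt)
  have hFY : ⟪θ, mv X β⟫ ≤ Ωβ + Ωs := inner_mv_transpose X θ β ▸ inner_le_add_of_econj_eq hΩβ hΩs
  constructor
  · calc 𝒰 ‖mv X β - z₀‖ ≤ f (mv X β) - f z₀ - ⟪(-lam) • θ, mv X β - z₀⟫ := hgrad ▸ hU z₀ (mv X β)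
      _ = f (mv X β) + (⟪(-lam) • θ, z₀⟫ - f z₀) + lam * ⟪θ, mv X β⟫ := by
        rw [inner_sub_right, inner_smul_left, inner_smul_left]
        simp only [conj_trivial]
        ring
      _ ≤ _ := by gcongr
  · have hBregman := hU (mv X β) z₀
    have hUnn := h𝒰nn _ (norm_nonneg (z₀ - mv X β))
    calc f (mv X β) - f z₀ ≤ ⟪f' (mv X β), mv X β - z₀⟫ := by
          rw [← neg_sub z₀, inner_neg_right]
          linarith
      _ ≤ _ := real_inner_le_norm _ _

/-- uniform convexity controls the distance to the dual optimum.
`f` is differentiable and convex, `𝒰 : [0,∞) → [0,∞)` is increasing with `𝒰(0) = 0`,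
and `f` is `U`-convex with `U(u) = 𝒰(‖u‖₂)`.  With `Ω(β) = Ωβ`, `Ω*(Xᵀθ) = Ωs`
finite and the supremum defining `f*(-λθ)` attained at `z₀`
(`Gap_λ(β,θ) = f(Xβ) + (⟪-λθ, z₀⟫ - f z₀) + λ(Ωβ + Ωs)`):
`𝒰(‖Xβ - z₀‖₂) ≤ Gap_λ(β,θ)` and `f(Xβ) - f(z₀) ≤ ‖∇f(Xβ)‖₂ ‖Xβ - z₀‖₂`. -/
theorem stmt10 {n p : ℕ} (X : Matrix (Fin n) (Fin p) ℝ)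
    (f : Vec n → ℝ) (f' : Vec n → Vec n)
    (hdiff : ∀ x, HasGradientAt f (f' x) x)
    (hconv : ConvexOn ℝ Set.univ f)
    (𝒰 : ℝ → ℝ) (hmono : MonotoneOn 𝒰 (Set.Ici 0)) (h𝒰0 : 𝒰 0 = 0)
    (h𝒰nn : ∀ t, 0 ≤ t → 0 ≤ 𝒰 t)
    (hU : ∀ x z : Vec n, 𝒰 ‖z - x‖ ≤ f z - f x - ⟪f' x, z - x⟫)
    (Ω : Vec p → EReal)
    (lam : ℝ) (hlam : 0 < lam)
    (β : Vec p) (θ : Vec n)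
    (Ωβ Ωs : ℝ)
    (hΩβ : Ω β = (Ωβ : EReal))
    (hΩs : econj Ω (mv X.transpose θ) = (Ωs : EReal))
    (z₀ : Vec n)
    (hatt : rconj f ((-lam) • θ) = ((⟪(-lam) • θ, z₀⟫ - f z₀ : ℝ) : EReal)) :
    𝒰 ‖mv X β - z₀‖ ≤
        f (mv X β) + (⟪(-lam) • θ, z₀⟫ - f z₀) + lam * (Ωβ + Ωs) ∧
    f (mv X β) - f z₀ ≤ ‖f' (mv X β)‖ * ‖mv X β - z₀‖ :=
  stmt10_general X f f' hdiff 𝒰 h𝒰nn hU Ω lam hlam β θ Ωβ Ωs hΩβ hΩs z₀ hatt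

end
end

section
/- Let λ > 0 and μ > 0, and suppose P_λ is μ-strongly convex, i.e. β ↦ P_λ(β) − (μ/2)‖β‖₂² is convex on ℝ^p. Let β̂ be a minimizer of P_λ with P_λ(β̂) finite. Then for every β ∈ ℝ^p and every θ ∈ ℝ^n with f*(−λθ) and Ω*(X^⊤θ) finite, one has ‖β̂ − β‖₂ ≤ √(2 Gap_λ(β, θ) / μ) (in particular Gap_λ(β, θ) ≥ 0). -/
/-!
Let `c = (μ/2)‖β - β̂‖²`. Strong convexity of `P_λ` on the segment `β_t = tβ + (1-t)β̂`, together
with `P_λ(β̂) ≤ P_λ(β_t)`, gives `P_λ(β̂) + (1-t)c ≤ P_λ(β)` for `0 < t < 1`, hence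
`P_λ(β̂) + c ≤ P_λ(β)` as `t → 0`. The Fenchel–Young inequalities for `f` at `Xβ̂` and for `Ω` at
`β̂` add up to weak duality `0 ≤ P_λ(β̂) + f*(-λθ) + λΩ*(Xᵀθ)`, so `c ≤ Gap_λ(β, θ)`.
-/

open scoped RealInnerProductSpace

noncomputable section

/-- Primal objective `P_λ(β) = f(Xβ) + λ Ω(β)`, with values in `EReal`. -/
noncomputable def Pfun {n p : ℕ} (X : Matrix (Fin n) (Fin p) ℝ)
    (f : Vec n → ℝ) (Ω : Vec p → EReal) (lam : ℝ) (b : Vec p) : EReal :=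
  ((f (mv X b) : ℝ) : EReal) + ((lam : ℝ) : EReal) * Ω b

/-- Convexity of an `EReal`-valued function, via convex-combination inequalities. -/
def ECvx {d : ℕ} (g : Vec d → EReal) : Prop :=
  ∀ b1 b2 : Vec d, ∀ t : ℝ, 0 ≤ t → t ≤ 1 →
    g (t • b1 + (1 - t) • b2) ≤
      ((t : ℝ) : EReal) * g b1 + (((1 - t) : ℝ) : EReal) * g b2

lemma mv_adjoint {n p : ℕ} (X : Matrix (Fin n) (Fin p) ℝ) (θ : Vec n) (b : Vec p) :
    ⟪mv X.transpose θ, b⟫ = ⟪θ, mv X b⟫ := by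
  simp only [mv, EuclideanSpace.inner_eq_star_dotProduct, star_trivial, Matrix.mulVec_transpose,
    Matrix.dotProduct_mulVec, dotProduct_comm]

lemma norm_smul_add_one_sub_smul_sq {E : Type*} [NormedAddCommGroup E] [InnerProductSpace ℝ E]
    (t : ℝ) (x y : E) :
    ‖t • x + (1 - t) • y‖ ^ 2 =
      t * ‖x‖ ^ 2 + (1 - t) * ‖y‖ ^ 2 - t * (1 - t) * ‖x - y‖ ^ 2 := by
  simp only [← real_inner_self_eq_norm_sq, inner_add_add_self, inner_sub_sub_self,
    real_inner_smul_left, real_inner_smul_right]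
  ring

lemma EReal.exists_eq_coe_of_coe_add_coe_mul_eq {a c r : ℝ} (hc : 0 < c) {y : EReal}
    (h : (a : EReal) + c * y = r) : ∃ w : ℝ, y = w := by
  induction y using EReal.rec with
  | bot => simp [EReal.coe_mul_bot_of_pos hc] at h
  | coe w => exact ⟨w, rfl⟩
  | top => simp [EReal.coe_mul_top_of_pos hc] at h

lemma EReal.exists_eq_coe_of_add_coe_eq {b r : ℝ} {y : EReal} (h : y + b = r) :
    ∃ w : ℝ, y = w := by
  induction y using EReal.rec with
  | bot => simp at h
  | coe w => exact ⟨w, rfl⟩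
  | top => simp at h

lemma inner_sub_le_of_rconj_eq {d : ℕ} {f : Vec d → ℝ} {u : Vec d} {c : ℝ}
    (h : rconj f u = c) (x : Vec d) : ⟪u, x⟫ - f x ≤ c :=
  EReal.coe_le_coe_iff.mp (h ▸ le_iSup (fun x ↦ ((⟪u, x⟫ - f x : ℝ) : EReal)) x)

lemma inner_sub_le_of_econj_eq {d : ℕ} {g : Vec d → EReal} {u : Vec d} {c : ℝ}
    (h : econj g u = c) {x : Vec d} {w : ℝ} (hx : g x = w) : ⟪u, x⟫ - w ≤ c := by
  have := le_iSup (fun x ↦ ((⟪u, x⟫ : ℝ) : EReal) - g x) x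
  rw [← econj, h, hx] at this
  exact_mod_cast this

lemma weak_duality {n p : ℕ} {X : Matrix (Fin n) (Fin p) ℝ} {f : Vec n → ℝ} {Ω : Vec p → EReal}
    {lam : ℝ} (hlam : 0 ≤ lam) {θ : Vec n} {fs Ωs : ℝ}
    (hfs : rconj f ((-lam) • θ) = fs) (hΩs : econj Ω (mv X.transpose θ) = Ωs)
    {b : Vec p} {w : ℝ} (hw : Ω b = w) :
    0 ≤ f (mv X b) + lam * w + (fs + lam * Ωs) := by
  have hf := inner_sub_le_of_rconj_eq hfs (mv X b)
  have hΩ := inner_sub_le_of_econj_eq hΩs hw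
  rw [real_inner_smul_left] at hf
  rw [mv_adjoint] at hΩ
  nlinarith [mul_le_mul_of_nonneg_left hΩ hlam]

lemma le_of_forall_mem_Ioo_add_one_sub_mul_le {a b c : ℝ}
    (h : ∀ t ∈ Set.Ioo (0 : ℝ) 1, a + (1 - t) * c ≤ b) : a + c ≤ b := by
  have hlim : Filter.Tendsto (fun t : ℝ ↦ a + (1 - t) * c) (nhdsWithin 0 (Set.Ioi 0))
      (nhds (a + c)) := by
    have : Continuous (fun t : ℝ ↦ a + (1 - t) * c) := by fun_prop
    simpa using this.continuousWithinAt.tendsto (x := 0) (s := Set.Ioi 0)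
  exact le_of_tendsto hlim (Filter.eventually_of_mem (Ioo_mem_nhdsGT one_pos) h)

theorem ECvx.add_half_mul_norm_sub_sq_le {d : ℕ} {g : Vec d → EReal} {μ : ℝ}
    (hsc : ECvx fun b ↦ g b - ((μ / 2 * ‖b‖ ^ 2 : ℝ) : EReal)) {x₀ x : Vec d}
    (hmin : ∀ b, g x₀ ≤ g b) {r s : ℝ} (hr : g x₀ = r) (hs : g x = s) :
    r + μ / 2 * ‖x - x₀‖ ^ 2 ≤ s := by
  refine le_of_forall_mem_Ioo_add_one_sub_mul_le fun t ⟨ht0, ht1⟩ ↦ ?_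
  set xt := t • x + (1 - t) • x₀
  have hconv := hsc x x₀ t ht0.le ht1.le
  have hlow : (r : EReal) ≤ g xt := hr ▸ hmin xt
  simp only [hr, hs, ← EReal.coe_sub, ← EReal.coe_mul, ← EReal.coe_add] at hconv
  obtain ⟨u, hu⟩ : ∃ u : ℝ, g xt = u := by
    refine ⟨(g xt).toReal, (EReal.coe_toReal (fun htop ↦ ?_)
      (ne_bot_of_le_ne_bot (EReal.coe_ne_bot r) hlow)).symm⟩
    rw [htop, EReal.top_sub_coe] at hconv
    exact EReal.coe_ne_top _ (top_le_iff.mp hconv)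
  rw [hu] at hconv hlow
  have hlow' : r ≤ u := by exact_mod_cast hlow
  have hup : u - μ / 2 * ‖xt‖ ^ 2 ≤
      t * (s - μ / 2 * ‖x‖ ^ 2) + (1 - t) * (r - μ / 2 * ‖x₀‖ ^ 2) := by
    exact_mod_cast hconv
  rw [norm_smul_add_one_sub_smul_sq] at hup
  have hscaled : t * (r + (1 - t) * (μ / 2 * ‖x - x₀‖ ^ 2)) ≤ t * s := by
    linear_combination hlow' + hup
  exact le_of_mul_le_mul_left hscaled ht0

theorem stmt15_general {n p : ℕ} (X : Matrix (Fin n) (Fin p) ℝ)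
    (f : Vec n → ℝ)
    (Ω : Vec p → EReal)
    (lam μ : ℝ) (hlam : 0 < lam) (hμ : 0 < μ)
    (hsc : ECvx fun b : Vec p =>
      Pfun X f Ω lam b - ((μ / 2 * ‖b‖ ^ 2 : ℝ) : EReal))
    (bhat : Vec p)
    (hmin : ∀ b, Pfun X f Ω lam bhat ≤ Pfun X f Ω lam b)
    (hfin : ∃ r : ℝ, Pfun X f Ω lam bhat = (r : EReal)) :
    ∀ (β : Vec p) (θ : Vec n) (fs Ωs : ℝ),
      rconj f ((-lam) • θ) = (fs : EReal) →
      econj Ω (mv X.transpose θ) = (Ωs : EReal) →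
      ∀ G : ℝ,
        ((f (mv X β) : ℝ) : EReal) + ((fs : ℝ) : EReal)
            + ((lam : ℝ) : EReal) * (Ω β + ((Ωs : ℝ) : EReal)) = (G : EReal) →
        0 ≤ G ∧ ‖bhat - β‖ ≤ Real.sqrt (2 * G / μ) := by
  intro β θ fs Ωs hfs hΩs G hG
  obtain ⟨r, hr⟩ := hfin
  obtain ⟨ωh, hωh⟩ := EReal.exists_eq_coe_of_coe_add_coe_mul_eq hlam hr
  rw [← EReal.coe_add] at hG
  obtain ⟨ω', hω'⟩ := EReal.exists_eq_coe_of_coe_add_coe_mul_eq hlam hG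
  obtain ⟨ω, hω⟩ := EReal.exists_eq_coe_of_add_coe_eq hω'
  have hPbhat : Pfun X f Ω lam bhat = ((f (mv X bhat) + lam * ωh : ℝ) : EReal) := by
    rw [Pfun, hωh]; norm_cast
  have hPβ : Pfun X f Ω lam β = ((f (mv X β) + lam * ω : ℝ) : EReal) := by
    rw [Pfun, hω]; norm_cast
  have hgap : f (mv X β) + fs + lam * (ω + Ωs) = G := by
    rw [hω] at hG; exact_mod_cast hG
  have hgrowth := hsc.add_half_mul_norm_sub_sq_le hmin hPbhat hPβ
  have hdual := weak_duality hlam.le hfs hΩs hωh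
  have hdist : μ / 2 * ‖bhat - β‖ ^ 2 ≤ G := by rw [norm_sub_rev]; linarith
  refine ⟨le_trans (by positivity) hdist, Real.le_sqrt_of_sq_le ?_⟩
  rw [le_div_iff₀ hμ]
  linarith

/-- Lemma: gap safe region.
`P_λ` is `μ`-strongly convex (`β ↦ P_λ(β) - (μ/2)‖β‖²` is convex), `β̂` minimizes
`P_λ` with finite optimal value.  Then for every `β, θ` with `f*(-λθ) = fs` and
`Ω*(Xᵀθ) = Ωs` finite and finite duality gap
`G = f(Xβ) + fs + λ(Ω(β) + Ωs)`, one has `0 ≤ G` and `‖β̂ - β‖₂ ≤ √(2G/μ)`. -/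
theorem stmt15 {n p : ℕ} (X : Matrix (Fin n) (Fin p) ℝ)
    (f : Vec n → ℝ) (hconv : ConvexOn ℝ Set.univ f)
    (Ω : Vec p → EReal)
    (lam μ : ℝ) (hlam : 0 < lam) (hμ : 0 < μ)
    (hsc : ECvx fun b : Vec p =>
      Pfun X f Ω lam b - ((μ / 2 * ‖b‖ ^ 2 : ℝ) : EReal))
    (bhat : Vec p)
    (hmin : ∀ b, Pfun X f Ω lam bhat ≤ Pfun X f Ω lam b)
    (hfin : ∃ r : ℝ, Pfun X f Ω lam bhat = (r : EReal)) :
    ∀ (β : Vec p) (θ : Vec n) (fs Ωs : ℝ),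
      rconj f ((-lam) • θ) = (fs : EReal) →
      econj Ω (mv X.transpose θ) = (Ωs : EReal) →
      ∀ G : ℝ,
        ((f (mv X β) : ℝ) : EReal) + ((fs : ℝ) : EReal)
            + ((lam : ℝ) : EReal) * (Ω β + ((Ωs : ℝ) : EReal)) = (G : EReal) →
        0 ≤ G ∧ ‖bhat - β‖ ≤ Real.sqrt (2 * G / μ) :=
  stmt15_general X f Ω lam μ hlam hμ hsc bhat hmin hfin

end
end
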